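/- arXiv:1711.00571 — 3 statements merged into one kernel-verified Lean document; each statement's English description precedes it below -/
import Mathlib

section
/- Let A, A' be symmetric positive semidefinite matrices with (1+√ε)^{-1} A ⪯ A' ⪯ (1+√ε) A for some ε ≤ 1/16. Let b ∈ Range(A), and suppose A x = b and A' y = b. Then y^T A y ≤ 2 q(x), where q(z) = 2⟨b,z⟩ - z^T A z. -/
open Matrix

/-- Loewner order on real symmetric matrices: domination of quadratic forms. -/
def LoewnerLE {n : ℕ} (M N : Matrix (Fin n) (Fin n) ℝ) : Prop :=
  ∀ z : Fin n → ℝ, z ⬝ᵥ M.mulVec z ≤ z ⬝ᵥ N.mulVec z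

/-! Since `A x = b`, `q x = xᵀ A x`. Testing the lower Loewner bound on `y` gives
`yᵀ A y ≤ (1 + √ε) yᵀ A' y = (1 + √ε) yᵀ A x`, and Cauchy–Schwarz for the semi-inner product
`A` bounds the right side by `(1 + √ε) √(yᵀ A y · xᵀ A x)`. Hence `yᵀ A y ≤ (1 + √ε)² xᵀ A x`,
and `(1 + √ε)² ≤ 25/16 ≤ 2`. -/

lemma Matrix.PosSemidef.dotProduct_mulVec_sq_le {ι : Type*} [Fintype ι]
    {A : Matrix ι ι ℝ} (hA : A.PosSemidef) (x y : ι → ℝ) :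
    (y ⬝ᵥ A *ᵥ x) ^ 2 ≤ (x ⬝ᵥ A *ᵥ x) * (y ⬝ᵥ A *ᵥ y) := by
  classical
  have hsymm : x ⬝ᵥ A *ᵥ y = y ⬝ᵥ A *ᵥ x := by
    rw [dotProduct_mulVec, ← mulVec_transpose, dotProduct_comm,
      ← conjTranspose_eq_transpose_of_trivial, hA.isHermitian.eq]
  have := LinearMap.BilinForm.apply_mul_apply_le_of_forall_zero_le (toLinearMap₂' ℝ A)
    (fun z => by simpa [toLinearMap₂'_apply'] using hA.dotProduct_mulVec_nonneg z) x y
  simpa only [toLinearMap₂'_apply', hsymm, sq] using this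

lemma dotProduct_mulVec_le_sq_mul_of_loewnerLE {n : ℕ} {A A' : Matrix (Fin n) (Fin n) ℝ}
    (hA : A.PosSemidef) {c : ℝ} (hc : 0 < c) (hAA' : LoewnerLE (c⁻¹ • A) A')
    {x y : Fin n → ℝ} (hxy : A' *ᵥ y = A *ᵥ x) :
    y ⬝ᵥ A *ᵥ y ≤ c ^ 2 * (x ⬝ᵥ A *ᵥ x) := by
  have hy : 0 ≤ y ⬝ᵥ A *ᵥ y := by simpa using hA.dotProduct_mulVec_nonneg y
  have hx : 0 ≤ x ⬝ᵥ A *ᵥ x := by simpa using hA.dotProduct_mulVec_nonneg x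
  have hlow : y ⬝ᵥ A *ᵥ y ≤ c * (y ⬝ᵥ A *ᵥ x) := by
    have := hAA' y
    rw [smul_mulVec, dotProduct_smul, smul_eq_mul, hxy, inv_mul_le_iff₀ hc] at this
    exact this
  have hsq : (y ⬝ᵥ A *ᵥ y) ^ 2 ≤ c ^ 2 * (x ⬝ᵥ A *ᵥ x) * (y ⬝ᵥ A *ᵥ y) :=
    calc (y ⬝ᵥ A *ᵥ y) ^ 2 ≤ (c * (y ⬝ᵥ A *ᵥ x)) ^ 2 := pow_le_pow_left₀ hy hlow 2
      _ = c ^ 2 * (y ⬝ᵥ A *ᵥ x) ^ 2 := by ring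
      _ ≤ c ^ 2 * ((x ⬝ᵥ A *ᵥ x) * (y ⬝ᵥ A *ᵥ y)) := by
        gcongr
        exact hA.dotProduct_mulVec_sq_le x y
      _ = c ^ 2 * (x ⬝ᵥ A *ᵥ x) * (y ⬝ᵥ A *ᵥ y) := by ring
  rcases hy.eq_or_lt with hy0 | hypos
  · rw [← hy0]
    positivity
  · rw [sq] at hsq
    exact le_of_mul_le_mul_right hsq hypos

lemma one_add_sqrt_sq_le_two {ε : ℝ} (hε : ε ≤ 1 / 16) : (1 + √ε) ^ 2 ≤ 2 := by
  have : √ε ≤ 1 / 4 := Real.sqrt_le_iff.mpr ⟨by norm_num, by linarith⟩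
  nlinarith [Real.sqrt_nonneg ε]

theorem stmt_3_general {n : ℕ} (A A' : Matrix (Fin n) (Fin n) ℝ)
    (hA : A.PosSemidef)
    (ε : ℝ) (hε : ε ≤ 1 / 16)
    (hlow : LoewnerLE ((1 + Real.sqrt ε)⁻¹ • A) A')
    (b x y : Fin n → ℝ)
    (hx : A.mulVec x = b) (hy : A'.mulVec y = b)
    (q : (Fin n → ℝ) → ℝ)
    (hq : ∀ z, q z = 2 * (b ⬝ᵥ z) - z ⬝ᵥ A.mulVec z) :
    y ⬝ᵥ A.mulVec y ≤ 2 * q x := by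
  have hqx : q x = x ⬝ᵥ A *ᵥ x := by
    rw [hq, ← hx, dotProduct_comm]
    ring
  calc y ⬝ᵥ A *ᵥ y ≤ (1 + √ε) ^ 2 * (x ⬝ᵥ A *ᵥ x) :=
        dotProduct_mulVec_le_sq_mul_of_loewnerLE hA (by positivity) hlow (hy.trans hx.symm)
    _ ≤ 2 * q x := by
        rw [hqx]
        gcongr
        · simpa using hA.dotProduct_mulVec_nonneg x
        · exact one_add_sqrt_sq_le_two hε

theorem stmt_3 {n : ℕ} (A A' : Matrix (Fin n) (Fin n) ℝ)
    (hA : A.PosSemidef) (hA' : A'.PosSemidef)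
    (ε : ℝ) (hε0 : 0 ≤ ε) (hε : ε ≤ 1 / 16)
    (hlow : LoewnerLE ((1 + Real.sqrt ε)⁻¹ • A) A')
    (hhigh : LoewnerLE A' ((1 + Real.sqrt ε) • A))
    (b x y : Fin n → ℝ) (hb : ∃ w, A.mulVec w = b)
    (hx : A.mulVec x = b) (hy : A'.mulVec y = b)
    (q : (Fin n → ℝ) → ℝ)
    (hq : ∀ z, q z = 2 * (b ⬝ᵥ z) - z ⬝ᵥ A.mulVec z) :
    y ⬝ᵥ A.mulVec y ≤ 2 * q x :=
  stmt_3_general A A' hA ε hε hlow b x y hx hy q hq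
end

section
/- Let A be a symmetric PSD matrix, b ∈ Range(A), ε ≤ 1/16, and S a symmetric matrix with (1+√ε)^{-1} A⁺ ⪯ S ⪯ (1+√ε) A⁺ and Range(S) = Range(A). Let y = S b, and let f be a real number satisfying (1-ε) y^T A y ≤ f ≤ (1+ε) y^T A y. Then |2 b^T y - f - b^T A⁺ b| ≤ 4ε · b^T A⁺ b. -/
open Matrix

/-- `Ap` is the Moore–Penrose pseudoinverse of `A` (the four Penrose conditions). -/
def IsMoorePenroseInv {n : ℕ} (A Ap : Matrix (Fin n) (Fin n) ℝ) : Prop :=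
  A * Ap * A = A ∧ Ap * A * Ap = Ap ∧ (A * Ap)ᵀ = A * Ap ∧ (Ap * A)ᵀ = Ap * A

/-!
Put `D = S - A⁺` and `x = D b`. Because `A A⁺ b = b`, the quantity `yᵀAy - 2 bᵀy + bᵀA⁺b` is the
`A`-energy `xᵀAx ≥ 0` of `y - A⁺b`. The sandwich hypothesis gives `-√ε A⁺ ⪯ D ⪯ √ε A⁺`, and
polarizing this two-sided bound against `u = A x` (using `A A⁺ A = A`) yields `xᵀAx ≤ ε bᵀA⁺b`.
Together with `bᵀy ≤ (1 + √ε) bᵀA⁺b` this gives `yᵀAy ≤ 2 bᵀA⁺b`, and the estimate follows from the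
bounds on `f` by arithmetic.
-/

variable {n : ℕ}

namespace IsMoorePenroseInv

variable {A B C : Matrix (Fin n) (Fin n) ℝ}

theorem unique (hB : IsMoorePenroseInv A B) (hC : IsMoorePenroseInv A C) : B = C := by
  obtain ⟨hB₁, hB₂, hB₃, hB₄⟩ := hB
  obtain ⟨hC₁, hC₂, hC₃, hC₄⟩ := hC
  have hleft : A * B = A * C :=
    calc A * B = (A * B)ᵀ := hB₃.symm
      _ = (A * C * (A * B))ᵀ := by rw [← mul_assoc, hC₁]
      _ = A * B * (A * C) := by rw [transpose_mul, hB₃, hC₃]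
      _ = A * C := by rw [← mul_assoc, hB₁]
  have hright : B * A = C * A :=
    calc B * A = (B * A)ᵀ := hB₄.symm
      _ = (B * A * (C * A))ᵀ := by rw [mul_assoc B, ← mul_assoc A, hC₁]
      _ = C * A * (B * A) := by rw [transpose_mul, hC₄, hB₄]
      _ = C * A := by rw [mul_assoc C, ← mul_assoc A, hB₁]
  calc B = B * A * B := hB₂.symm
    _ = C * A * C := by rw [hright, mul_assoc, hleft, ← mul_assoc]
    _ = C := hC₂

theorem transpose (hB : IsMoorePenroseInv A B) : IsMoorePenroseInv Aᵀ Bᵀ := by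
  obtain ⟨hB₁, hB₂, hB₃, hB₄⟩ := hB
  refine ⟨?_, ?_, ?_, ?_⟩
  · rw [← transpose_mul, ← transpose_mul, ← mul_assoc, hB₁]
  · rw [← transpose_mul, ← transpose_mul, ← mul_assoc, hB₂]
  · rw [← transpose_mul, hB₄, hB₄]
  · rw [← transpose_mul, hB₃, hB₃]

theorem transpose_eq (hB : IsMoorePenroseInv A B) (hA : Aᵀ = A) : Bᵀ = B :=
  unique (hA ▸ hB.transpose) hB

end IsMoorePenroseInv

namespace LoewnerLE

variable {S P D : Matrix (Fin n) (Fin n) ℝ} {s : ℝ}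

theorem dotProduct_mulVec_nonneg (hS : S.PosSemidef) (hs : 0 < s) (h : LoewnerLE S (s • P))
    (z : Fin n → ℝ) : 0 ≤ z ⬝ᵥ P *ᵥ z := by
  have hSz : 0 ≤ z ⬝ᵥ S *ᵥ z := by simpa using hS.dotProduct_mulVec_nonneg z
  have hz := h z
  rw [smul_mulVec, dotProduct_smul, smul_eq_mul] at hz
  exact nonneg_of_mul_nonneg_right (hSz.trans hz) hs

theorem sub_le_smul (h : LoewnerLE S ((1 + s) • P)) : LoewnerLE (S - P) (s • P) := by
  intro z
  have hz := h z
  simp only [sub_mulVec, smul_mulVec, dotProduct_sub, dotProduct_smul, smul_eq_mul] at hz ⊢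
  linarith

theorem neg_smul_le_sub (hs : 0 ≤ s) (hP : ∀ z, 0 ≤ z ⬝ᵥ P *ᵥ z)
    (h : LoewnerLE ((1 + s)⁻¹ • P) S) : LoewnerLE (-(s • P)) (S - P) := by
  intro z
  have hz := h z
  have hinv : 1 - s ≤ (1 + s)⁻¹ := by
    rw [← one_div, le_div_iff₀ (by linarith)]
    nlinarith
  simp only [neg_mulVec, sub_mulVec, smul_mulVec, dotProduct_neg, dotProduct_sub, dotProduct_smul,
    smul_eq_mul] at hz ⊢
  nlinarith [mul_le_mul_of_nonneg_right hinv (hP z)]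

theorem two_mul_dotProduct_mulVec_le (hD : Dᵀ = D) (hlo : LoewnerLE (-(s • P)) D)
    (hhi : LoewnerLE D (s • P)) (u v : Fin n → ℝ) :
    2 * (u ⬝ᵥ D *ᵥ v) ≤ s * (u ⬝ᵥ P *ᵥ u + v ⬝ᵥ P *ᵥ v) := by
  have hsymm : v ⬝ᵥ D *ᵥ u = u ⬝ᵥ D *ᵥ v := by rw [← dotProduct_transpose_mulVec, hD]
  have hplus := hhi (u + v)
  have hminus := hlo (u - v)
  simp only [neg_mulVec, smul_mulVec, mulVec_add, mulVec_sub, dotProduct_neg, dotProduct_smul,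
    smul_eq_mul, dotProduct_add, dotProduct_sub, add_dotProduct, sub_dotProduct, hsymm]
    at hplus hminus
  linarith

theorem mulVec_dotProduct_mulVec_le {A : Matrix (Fin n) (Fin n) ℝ}
    (hA : Aᵀ = A) (hAPA : A * P * A = A) (hD : Dᵀ = D) (hs : 0 < s)
    (hlo : LoewnerLE (-(s • P)) D) (hhi : LoewnerLE D (s • P)) (b : Fin n → ℝ) :
    D *ᵥ b ⬝ᵥ A *ᵥ (D *ᵥ b) ≤ s ^ 2 * (b ⬝ᵥ P *ᵥ b) := by
  set x := D *ᵥ b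
  -- `u = s⁻¹ • A x` makes both `u ⬝ᵥ D b` and `u ⬝ᵥ P u` multiples of `x ⬝ᵥ A x`
  have hpol := two_mul_dotProduct_mulVec_le hD hlo hhi (s⁻¹ • A *ᵥ x) b
  have hcross : (s⁻¹ • A *ᵥ x) ⬝ᵥ D *ᵥ b = s⁻¹ * (x ⬝ᵥ A *ᵥ x) := by
    rw [smul_dotProduct, dotProduct_comm, smul_eq_mul]
  have hAPAx : A *ᵥ x ⬝ᵥ P *ᵥ (A *ᵥ x) = x ⬝ᵥ A *ᵥ x := by
    rw [dotProduct_comm, ← dotProduct_transpose_mulVec, hA, mulVec_mulVec, mulVec_mulVec,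
      hAPA]
  rw [hcross, mulVec_smul, smul_dotProduct, dotProduct_smul, hAPAx, smul_eq_mul,
    smul_eq_mul] at hpol
  have hsinv : s * s⁻¹ = 1 := mul_inv_cancel₀ hs.ne'
  have key : s⁻¹ * (x ⬝ᵥ A *ᵥ x) ≤ s * (b ⬝ᵥ P *ᵥ b) := by
    rw [mul_add, ← mul_assoc s, hsinv, one_mul] at hpol
    linarith
  rwa [← mul_le_mul_iff_of_pos_left hs, ← mul_assoc, hsinv, one_mul, ← mul_assoc, ← sq] at key

end LoewnerLE

theorem sub_dotProduct_mulVec_sub {A : Matrix (Fin n) (Fin n) ℝ} (hA : Aᵀ = A)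
    {x b : Fin n → ℝ} (hx : A *ᵥ x = b) (y : Fin n → ℝ) :
    (y - x) ⬝ᵥ A *ᵥ (y - x) = y ⬝ᵥ A *ᵥ y - 2 * (b ⬝ᵥ y) + b ⬝ᵥ x := by
  have hxy : x ⬝ᵥ A *ᵥ y = b ⬝ᵥ y := by rw [← dotProduct_transpose_mulVec, hA, hx, dotProduct_comm]
  simp only [mulVec_sub, dotProduct_sub, sub_dotProduct, hx, hxy]
  rw [dotProduct_comm y b, dotProduct_comm x b]
  ring

theorem abs_two_mul_sub_sub_le {α β γ f ε : ℝ} (hε0 : 0 < ε) (hε : ε ≤ 1 / 16)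
    (hE0 : 0 ≤ γ - 2 * β + α) (hE : γ - 2 * β + α ≤ ε * α) (hβ : β ≤ (1 + √ε) * α)
    (hf1 : (1 - ε) * γ ≤ f) (hf2 : f ≤ (1 + ε) * γ) :
    |2 * β - f - α| ≤ 4 * ε * α := by
  have hα : 0 ≤ α := nonneg_of_mul_nonneg_right (hE0.trans hE) hε0
  have hsqrt : √ε ≤ 1 / 4 := by
    have h16 : √(1 / 16 : ℝ) = 1 / 4 := by
      rw [show (1 / 16 : ℝ) = (1 / 4) ^ 2 by norm_num, Real.sqrt_sq (by norm_num)]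
    exact h16 ▸ Real.sqrt_le_sqrt hε
  have hγ : γ ≤ 2 * α := by nlinarith
  rw [abs_le]
  constructor <;> nlinarith

theorem stmt_5_general {n : ℕ} (A Ap S : Matrix (Fin n) (Fin n) ℝ)
    (hA : A.PosSemidef) (hAp : IsMoorePenroseInv A Ap)
    (hS : S.PosSemidef)
    (ε : ℝ) (hε0 : 0 < ε) (hε : ε ≤ 1 / 16)
    (hlow : LoewnerLE ((1 + Real.sqrt ε)⁻¹ • Ap) S)
    (hhigh : LoewnerLE S ((1 + Real.sqrt ε) • Ap))
    (b : Fin n → ℝ) (hb : ∃ w, A.mulVec w = b)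
    (y : Fin n → ℝ) (hy : y = S.mulVec b)
    (f : ℝ)
    (hf1 : (1 - ε) * (y ⬝ᵥ A.mulVec y) ≤ f)
    (hf2 : f ≤ (1 + ε) * (y ⬝ᵥ A.mulVec y)) :
    |2 * (b ⬝ᵥ y) - f - b ⬝ᵥ Ap.mulVec b| ≤ 4 * ε * (b ⬝ᵥ Ap.mulVec b) := by
  have hs : 0 < √ε := Real.sqrt_pos.mpr hε0
  have hAsymm : Aᵀ = A := (isHermitian_iff_isSymm.mp hA.1).eq
  have hSsymm : Sᵀ = S := (isHermitian_iff_isSymm.mp hS.1).eq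
  have hApsymm : Apᵀ = Ap := hAp.transpose_eq hAsymm
  have hAp_nonneg := hhigh.dotProduct_mulVec_nonneg hS (by positivity)
  have hAAp : A *ᵥ (Ap *ᵥ b) = b := by
    obtain ⟨w, rfl⟩ := hb
    rw [mulVec_mulVec, mulVec_mulVec, hAp.1]
  have henergy := sub_dotProduct_mulVec_sub hAsymm hAAp y
  have hD : (S - Ap)ᵀ = S - Ap := by rw [transpose_sub, hSsymm, hApsymm]
  have herror : (y - Ap *ᵥ b) ⬝ᵥ A *ᵥ (y - Ap *ᵥ b) ≤ ε * (b ⬝ᵥ Ap *ᵥ b) := by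
    have := LoewnerLE.mulVec_dotProduct_mulVec_le hAsymm hAp.1 hD hs
      (hlow.neg_smul_le_sub hs.le hAp_nonneg) hhigh.sub_le_smul b
    rwa [sub_mulVec, ← hy, Real.sq_sqrt hε0.le] at this
  have herror_nonneg : 0 ≤ (y - Ap *ᵥ b) ⬝ᵥ A *ᵥ (y - Ap *ᵥ b) := by
    simpa using hA.dotProduct_mulVec_nonneg (y - Ap *ᵥ b)
  have hβ : b ⬝ᵥ y ≤ (1 + √ε) * (b ⬝ᵥ Ap *ᵥ b) := by
    simpa only [hy, smul_mulVec, dotProduct_smul, smul_eq_mul] using hhigh b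
  exact abs_two_mul_sub_sub_le hε0 hε (henergy ▸ herror_nonneg) (henergy ▸ herror) hβ hf1 hf2

theorem stmt_5 {n : ℕ} (A Ap S : Matrix (Fin n) (Fin n) ℝ)
    (hA : A.PosSemidef) (hAp : IsMoorePenroseInv A Ap)
    (hS : S.PosSemidef)
    (ε : ℝ) (hε0 : 0 < ε) (hε : ε ≤ 1 / 16)
    (hlow : LoewnerLE ((1 + Real.sqrt ε)⁻¹ • Ap) S)
    (hhigh : LoewnerLE S ((1 + Real.sqrt ε) • Ap))
    (hrange : Set.range S.mulVec = Set.range A.mulVec)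
    (b : Fin n → ℝ) (hb : ∃ w, A.mulVec w = b)
    (y : Fin n → ℝ) (hy : y = S.mulVec b)
    (f : ℝ)
    (hf1 : (1 - ε) * (y ⬝ᵥ A.mulVec y) ≤ f)
    (hf2 : f ≤ (1 + ε) * (y ⬝ᵥ A.mulVec y)) :
    |2 * (b ⬝ᵥ y) - f - b ⬝ᵥ Ap.mulVec b| ≤ 4 * ε * (b ⬝ᵥ Ap.mulVec b) :=
  stmt_5_general A Ap S hA hAp hS ε hε0 hε hlow hhigh b hb y hy f hf1 hf2
end

section
/- Let A, A' be symmetric PSD matrices with (1+√ε)^{-1} A ⪯ A' ⪯ (1+√ε) A, where 0 ≤ ε. Then the spectral norm of A^{-1/2}(A - A')A^{-1/2} is at most √ε, where A^{-1/2} denotes the pseudoinverse of the PSD square root of A (assuming Range(A') ⊆ Range(A)). -/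
/-!
Put `w = Rp z`. The quadratic form of `Rp (A - A') Rp` at `z` is `wᵀ (A - A') w`, and the Loewner
sandwich bounds its absolute value by `√ε · wᵀ A w = √ε · ‖R Rp z‖²`. Since `R Rp` is an
orthogonal projection, this is at most `√ε · ‖z‖²`; for a symmetric matrix the spectral norm is
the supremum of the absolute Rayleigh quotient.
-/

open Matrix

section MoorePenrose

variable {n : ℕ} {A B C : Matrix (Fin n) (Fin n) ℝ}

theorem IsMoorePenroseInv.transpose_s6 (h : IsMoorePenroseInv A B) : IsMoorePenroseInv Aᵀ Bᵀ := by
  obtain ⟨h₁, h₂, h₃, h₄⟩ := h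
  refine ⟨?_, ?_, ?_, ?_⟩
  · rw [← transpose_mul, ← transpose_mul, ← Matrix.mul_assoc, h₁]
  · rw [← transpose_mul, ← transpose_mul, ← Matrix.mul_assoc, h₂]
  · rw [← transpose_mul, transpose_transpose, h₄]
  · rw [← transpose_mul, transpose_transpose, h₃]

theorem IsMoorePenroseInv.unique_s6 (hB : IsMoorePenroseInv A B) (hC : IsMoorePenroseInv A C) :
    B = C := by
  obtain ⟨hB₁, hB₂, hB₃, hB₄⟩ := hB
  obtain ⟨hC₁, hC₂, hC₃, hC₄⟩ := hC
  have hAB : A * B = A * C :=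
    calc A * B = (A * B)ᵀ := hB₃.symm
      _ = (A * C * (A * B))ᵀ := by rw [← Matrix.mul_assoc (A * C), hC₁]
      _ = A * B * (A * C) := by rw [transpose_mul, hB₃, hC₃]
      _ = A * C := by rw [← Matrix.mul_assoc, hB₁]
  have hBA : B * A = C * A :=
    calc B * A = (B * A)ᵀ := hB₄.symm
      _ = (B * A * (C * A))ᵀ := by rw [Matrix.mul_assoc B A, ← Matrix.mul_assoc A C A, hC₁]
      _ = C * A * (B * A) := by rw [transpose_mul, hB₄, hC₄]
      _ = C * A := by rw [Matrix.mul_assoc C A, ← Matrix.mul_assoc A B A, hB₁]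
  calc B = B * A * B := hB₂.symm
    _ = C * A * C := by rw [hBA, Matrix.mul_assoc, hAB, ← Matrix.mul_assoc]
    _ = C := hC₂

theorem IsMoorePenroseInv.isSymm (hA : A.IsSymm) (h : IsMoorePenroseInv A B) : B.IsSymm :=
  (hA ▸ h.transpose_s6).unique_s6 h

theorem IsMoorePenroseInv.isIdempotentElem_mul (h : IsMoorePenroseInv A B) :
    IsIdempotentElem (A * B) := by
  rw [IsIdempotentElem, ← Matrix.mul_assoc, h.1]

end MoorePenrose

theorem abs_sub_le_mul_of_inv_mul_le_of_le_mul {s q q' : ℝ} (hs : 0 ≤ s)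
    (hlow : (1 + s)⁻¹ * q ≤ q') (hhigh : q' ≤ (1 + s) * q) : |q - q'| ≤ s * q := by
  rw [inv_mul_le_iff₀ (by linarith)] at hlow
  rw [abs_le]
  constructor <;> nlinarith

theorem abs_dotProduct_sub_mulVec_le_of_loewnerLE {n : ℕ} {A A' : Matrix (Fin n) (Fin n) ℝ}
    {s : ℝ} (hs : 0 ≤ s) (hlow : LoewnerLE ((1 + s)⁻¹ • A) A')
    (hhigh : LoewnerLE A' ((1 + s) • A)) (w : Fin n → ℝ) :
    |w ⬝ᵥ (A - A') *ᵥ w| ≤ s * (w ⬝ᵥ A *ᵥ w) := by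
  have hlow := hlow w
  have hhigh := hhigh w
  rw [smul_mulVec, dotProduct_smul, smul_eq_mul] at hlow hhigh
  rw [sub_mulVec, dotProduct_sub]
  exact abs_sub_le_mul_of_inv_mul_le_of_le_mul hs hlow hhigh

section Quadratic

variable {m : Type*} [Fintype m]

theorem Matrix.dotProduct_transpose_mul_mul_mulVec {α : Type*} [CommSemiring α]
    (S X : Matrix m m α) (v : m → α) :
    v ⬝ᵥ (Sᵀ * X * S) *ᵥ v = S *ᵥ v ⬝ᵥ X *ᵥ (S *ᵥ v) := by
  rw [← mulVec_mulVec, ← mulVec_mulVec, dotProduct_transpose_mulVec, dotProduct_comm]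

theorem Matrix.IsSymm.dotProduct_mulVec_self_le {P : Matrix m m ℝ} (hP : P.IsSymm)
    (hPP : IsIdempotentElem P) (z : m → ℝ) : P *ᵥ z ⬝ᵥ P *ᵥ z ≤ z ⬝ᵥ z := by
  have hPz : P *ᵥ z ⬝ᵥ P *ᵥ z = z ⬝ᵥ P *ᵥ z := by
    conv_lhs => rw [← dotProduct_transpose_mulVec, hP.eq, mulVec_mulVec, hPP.eq]
  have hcompl : (z - P *ᵥ z) ⬝ᵥ (z - P *ᵥ z) = z ⬝ᵥ z - P *ᵥ z ⬝ᵥ P *ᵥ z := by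
    simp only [sub_dotProduct, dotProduct_sub, hPz, dotProduct_comm (P *ᵥ z) z]
    ring
  have := dotProduct_self_star_nonneg (z - P *ᵥ z)
  rw [star_trivial, hcompl] at this
  linarith

open RealInnerProductSpace in
theorem ContinuousLinearMap.opNorm_le_of_abs_inner_self_le {E : Type*} [NormedAddCommGroup E]
    [InnerProductSpace ℝ E] {T : E →L[ℝ] E} (hT : T.IsSymmetric) {c : ℝ} (hc : 0 ≤ c)
    (h : ∀ x, |⟪T x, x⟫| ≤ c * ‖x‖ ^ 2) : ‖T‖ ≤ c := by
  rw [T.norm_eq_iSup_rayleighQuotient hT]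
  refine ciSup_le fun x => ?_
  rcases eq_or_ne x 0 with rfl | hx
  · simpa using hc
  rw [rayleighQuotient, reApplyInnerSelf_apply, RCLike.re_to_real, abs_div, abs_sq,
    div_le_iff₀ (by positivity)]
  exact h x

theorem Matrix.IsHermitian.norm_toEuclideanCLM_le [DecidableEq m] {M : Matrix m m ℝ}
    (hM : M.IsHermitian) {c : ℝ} (hc : 0 ≤ c)
    (h : ∀ z, |z ⬝ᵥ M *ᵥ z| ≤ c * (z ⬝ᵥ z)) : ‖toEuclideanCLM (𝕜 := ℝ) M‖ ≤ c := by
  refine ContinuousLinearMap.opNorm_le_of_abs_inner_self_le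
    (isSymmetric_toEuclideanLin_iff.mpr hM) hc fun x => ?_
  rw [real_inner_comm, inner_toEuclideanCLM, ← real_inner_self_eq_norm_sq,
    EuclideanSpace.inner_eq_star_dotProduct, star_trivial]
  exact h x

end Quadratic

theorem stmt_6_general {n : ℕ} (A A' : Matrix (Fin n) (Fin n) ℝ)
    (hA' : A'.PosSemidef)
    (ε : ℝ)
    (hlow : LoewnerLE ((1 + Real.sqrt ε)⁻¹ • A) A')
    (hhigh : LoewnerLE A' ((1 + Real.sqrt ε) • A))
    (R Rp : Matrix (Fin n) (Fin n) ℝ)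
    (hR : R.PosSemidef) (hRsq : R * R = A)  -- R = A^{1/2}, the PSD square root
    (hRp : IsMoorePenroseInv R Rp)          -- Rp = A^{-1/2}
    : ‖Matrix.toEuclideanCLM (𝕜 := ℝ) (Rp * (A - A') * Rp)‖ ≤ Real.sqrt ε := by
  have hRsymm : R.IsSymm := by rw [IsSymm, ← conjTranspose_eq_transpose_of_trivial]; exact hR.1
  have hRpsymm : Rp.IsSymm := hRp.isSymm hRsymm
  have hAherm : A.IsHermitian := by
    rw [← hRsq]
    nth_rw 1 [← hR.1.eq]
    exact isHermitian_conjTranspose_mul_self R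
  have hMherm : (Rp * (A - A') * Rp).IsHermitian := by
    have := isHermitian_conjTranspose_mul_mul Rp (hAherm.sub hA'.1)
    rwa [conjTranspose_eq_transpose_of_trivial, hRpsymm.eq] at this
  refine hMherm.norm_toEuclideanCLM_le (Real.sqrt_nonneg ε) fun z => ?_
  calc |z ⬝ᵥ (Rp * (A - A') * Rp) *ᵥ z| = |Rp *ᵥ z ⬝ᵥ (A - A') *ᵥ (Rp *ᵥ z)| := by
        rw [← dotProduct_transpose_mul_mul_mulVec, hRpsymm.eq]
    _ ≤ √ε * (Rp *ᵥ z ⬝ᵥ A *ᵥ (Rp *ᵥ z)) :=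
        abs_dotProduct_sub_mulVec_le_of_loewnerLE (Real.sqrt_nonneg ε) hlow hhigh _
    _ = √ε * ((R * Rp) *ᵥ z ⬝ᵥ (R * Rp) *ᵥ z) := by
        rw [← hRsq, ← mulVec_mulVec, ← mulVec_mulVec _ R Rp]
        nth_rw 1 [← hRsymm.eq]
        rw [dotProduct_transpose_mulVec, dotProduct_comm]
    _ ≤ √ε * (z ⬝ᵥ z) := by
        gcongr
        exact IsSymm.dotProduct_mulVec_self_le hRp.2.2.1 hRp.isIdempotentElem_mul z

theorem stmt_6 {n : ℕ} (A A' : Matrix (Fin n) (Fin n) ℝ)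
    (hA : A.PosSemidef) (hA' : A'.PosSemidef)
    (ε : ℝ) (hε0 : 0 ≤ ε)
    (hlow : LoewnerLE ((1 + Real.sqrt ε)⁻¹ • A) A')
    (hhigh : LoewnerLE A' ((1 + Real.sqrt ε) • A))
    (hrange : Set.range A'.mulVec ⊆ Set.range A.mulVec)
    (R Rp : Matrix (Fin n) (Fin n) ℝ)
    (hR : R.PosSemidef) (hRsq : R * R = A)  -- R = A^{1/2}, the PSD square root
    (hRp : IsMoorePenroseInv R Rp)          -- Rp = A^{-1/2}
    : ‖Matrix.toEuclideanCLM (𝕜 := ℝ) (Rp * (A - A') * Rp)‖ ≤ Real.sqrt ε :=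
  stmt_6_general A A' hA' ε hlow hhigh R Rp hR hRsq hRp
end
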